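/- Let γ > 0, λ > 0, ω > 8/γ², and let ψ be the sign-changing asymmetric stationary state: ψ(x) = √(2ω/λ)·sech(√ω(x − x̄₁)) for x < 0 and ψ(x) = −√(2ω/λ)·sech(√ω(x − x̄₂)) for x > 0, where x̄₁ = (1/(2√ω))·log((1 + t₁)/(1 − t₁)), x̄₂ = −(1/(2√ω))·log((1 + t₂)/(1 − t₂)), t₁ = (1 + √(1 + γ²ω) + √(γ²ω − 2 − 2√(1 + γ²ω)))/(2γ√ω), t₂ = (1 + √(1 + γ²ω) − √(γ²ω − 2 − 2√(1 + γ²ω)))/(2γ√ω). Then: (i) ∫_ℝ ψ² dx = 4√ω/λ − (2/(λγ))√(1 + γ²ω) − 2/(λγ); (ii) E_{γδ'}(ψ) = −(2/(3λ))ω^{3/2} + ((γ²ω − 2)/(3λγ³))·√(γ²ω + 1) − 2/(3λγ³); (iii) S_ω(ψ) := E_{γδ'}(ψ) + (ω/2)∫_ℝ ψ² dx = (4/(3λ))ω^{3/2} − (2/(3λγ³))(γ²ω + 1)^{3/2} − ω/(λγ) − 2/(3λγ³). -/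

import Mathlib

open MeasureTheory Real Filter Set Topology

noncomputable section

def sech (x : ℝ) : ℝ := 1 / Real.cosh x

/-!
On each half-line `ψ` is a translate `c · sech (k (x - a))` of the soliton, `k = √ω`, and the
substitution `u = tanh (k (x - a))` turns `ψ² dx`, `ψ⁴ dx` and `ψ'² dx` into `c² du / k`,
`c⁴ (1 - u²) du / k` and `c² k u² du` on an interval with one end at `±1`. The shifts are chosen so
that `tanh (-k x̄₁) = -t₁` and `tanh (-k x̄₂) = t₂`; hence `ψ(0-) = c t₂`, `ψ(0+) = -c t₁`, and all
three integrals are polynomials in `t₁ + t₂` and `t₁³ + t₂³`. With `s = γ√ω` and `r = √(1 + s²)`,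
`t₁` and `t₂` are the roots of `s² t² - s (1 + r) t + (1 + r)`, so `t₁ + t₂ = (1 + r) / s` and
`t₁² + t₂² = 1`, and the three identities reduce to algebra modulo `r² = 1 + s²`.
-/

lemma sech_pos (x : ℝ) : 0 < sech x := one_div_pos.mpr (cosh_pos x)

lemma sech_sq (x : ℝ) : sech x ^ 2 = 1 - tanh x ^ 2 := by
  have := cosh_sq_sub_sinh_sq x
  have := (cosh_pos x).ne'
  simp only [sech, tanh_eq_sinh_div_cosh]
  field_simp
  linarith

lemma hasDerivAt_tanh (x : ℝ) : HasDerivAt tanh (sech x ^ 2) x := by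
  have h := (hasDerivAt_sinh x).div (hasDerivAt_cosh x) (cosh_pos x).ne'
  rw [← show tanh = sinh / cosh from funext tanh_eq_sinh_div_cosh] at h
  refine h.congr_deriv ?_
  have := cosh_sq_sub_sinh_sq x
  have := (cosh_pos x).ne'
  rw [sech]
  field_simp
  linarith

lemma hasDerivAt_sech (x : ℝ) : HasDerivAt sech (-(tanh x * sech x)) x := by
  have h := (hasDerivAt_cosh x).inv (cosh_pos x).ne'
  rw [← show sech = cosh⁻¹ from funext fun y => one_div (cosh y)] at h
  refine h.congr_deriv ?_
  rw [sech, tanh_eq_sinh_div_cosh]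
  field_simp

lemma strictMono_tanh : StrictMono tanh :=
  strictMono_of_hasDerivAt_pos hasDerivAt_tanh fun x => pow_pos (sech_pos x) 2

lemma image_tanh_Ioi (c : ℝ) : tanh '' Ioi c = Ioo (tanh c) 1 := by
  refine Subset.antisymm ?_ fun u hu => ?_
  · rintro _ ⟨x, hx, rfl⟩
    exact ⟨strictMono_tanh hx, tanh_lt_one x⟩
  · have hu' : u ∈ Ioo (-1) 1 := ⟨(neg_one_lt_tanh c).trans hu.1, hu.2⟩
    refine ⟨artanh u, ?_, tanh_artanh hu'⟩
    rw [mem_Ioi, ← strictMono_tanh.lt_iff_lt, tanh_artanh hu']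
    exact hu.1

lemma image_tanh_Iio (c : ℝ) : tanh '' Iio c = Ioo (-1) (tanh c) := by
  refine Subset.antisymm ?_ fun u hu => ?_
  · rintro _ ⟨x, hx, rfl⟩
    exact ⟨neg_one_lt_tanh x, strictMono_tanh hx⟩
  · have hu' : u ∈ Ioo (-1) 1 := ⟨hu.1, hu.2.trans (tanh_lt_one c)⟩
    refine ⟨artanh u, ?_, tanh_artanh hu'⟩
    rw [mem_Iio, ← strictMono_tanh.lt_iff_lt, tanh_artanh hu']
    exact hu.2

section TanhSubstitution

variable {k : ℝ} (hk : 0 < k) (a : ℝ)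

lemma hasDerivAt_tanh_affine (x : ℝ) :
    HasDerivAt (fun x => tanh (k * (x - a))) (k * sech (k * (x - a)) ^ 2) x := by
  have h := (hasDerivAt_tanh _).comp x (((hasDerivAt_id x).sub_const a).const_mul k)
  exact h.congr_deriv (by simp [mul_comm])

include hk

lemma strictMono_tanh_affine : StrictMono fun x => tanh (k * (x - a)) :=
  strictMono_tanh.comp fun _ _ hxy => mul_lt_mul_of_pos_left (sub_lt_sub_right hxy a) hk

lemma image_tanh_affine_Ioi (b : ℝ) :
    (fun x => tanh (k * (x - a))) '' Ioi b = Ioo (tanh (k * (b - a))) 1 := by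
  rw [show (fun x => tanh (k * (x - a))) = tanh ∘ (k * ·) ∘ (· - a) from rfl, image_comp,
    image_comp, image_sub_const_Ioi, image_mul_left_Ioi hk, image_tanh_Ioi]

lemma image_tanh_affine_Iio (b : ℝ) :
    (fun x => tanh (k * (x - a))) '' Iio b = Ioo (-1) (tanh (k * (b - a))) := by
  rw [show (fun x => tanh (k * (x - a))) = tanh ∘ (k * ·) ∘ (· - a) from rfl, image_comp,
    image_comp, image_sub_const_Iio, image_mul_left_Iio hk, image_tanh_Iio]

lemma sech_sq_mul_comp_tanh_integral {s : Set ℝ} (hs : MeasurableSet s) {α β : ℝ}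
    (himg : (fun x => tanh (k * (x - a))) '' s = Ioo α β) (hαβ : α ≤ β) {g : ℝ → ℝ}
    (hg : Continuous g) :
    IntegrableOn (fun x => sech (k * (x - a)) ^ 2 * g (tanh (k * (x - a)))) s ∧
      ∫ x in s, sech (k * (x - a)) ^ 2 * g (tanh (k * (x - a))) = (∫ u in α..β, g u) / k := by
  have hderiv : ∀ x ∈ s, HasDerivWithinAt (fun x => tanh (k * (x - a)))
      (k * sech (k * (x - a)) ^ 2) s x :=
    fun x _ => (hasDerivAt_tanh_affine a x).hasDerivWithinAt
  have hmono := (strictMono_tanh_affine hk a).monotone.monotoneOn s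
  have hscale : ∀ x, (k * sech (k * (x - a)) ^ 2) • g (tanh (k * (x - a)))
      = k * (sech (k * (x - a)) ^ 2 * g (tanh (k * (x - a)))) := fun x => by
    rw [smul_eq_mul, mul_assoc]
  have hint := integrableOn_image_iff_integrableOn_deriv_smul_of_monotoneOn hs hderiv hmono g
  have hval := integral_image_eq_integral_deriv_smul_of_monotoneOn hs hderiv hmono g
  simp only [hscale, himg] at hint hval
  rw [integral_const_mul, ← integral_Ioc_eq_integral_Ioo,
    ← intervalIntegral.integral_of_le hαβ] at hval
  constructor
  · exact (integrable_const_mul_iff (IsUnit.mk0 k hk.ne') _).mp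
      (hint.mp (hg.integrableOn_Icc.mono_set Ioo_subset_Icc_self))
  · rw [hval]
    field_simp

end TanhSubstitution

lemma integral_eq_add_of_eqOn_Iio_Ici {F f g : ℝ → ℝ} {p : ℝ} (hf : EqOn F f (Iio p))
    (hg : EqOn F g (Ici p)) (hfi : IntegrableOn f (Iio p)) (hgi : IntegrableOn g (Ioi p)) :
    ∫ x, F x = (∫ x in Iio p, f x) + ∫ x in Ioi p, g x := by
  rw [← intervalIntegral.integral_Iio_add_Ici (hfi.congr_fun hf.symm measurableSet_Iio)
    (((integrableOn_Ici_iff_integrableOn_Ioi).mpr hgi).congr_fun hg.symm measurableSet_Ici),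
    setIntegral_congr_fun measurableSet_Iio hf, setIntegral_congr_fun measurableSet_Ici hg,
    integral_Ici_eq_integral_Ioi]

lemma setIntegral_compl_singleton_eq_add_of_eqOn {F f g : ℝ → ℝ} {p : ℝ}
    (hf : EqOn F f (Iio p)) (hg : EqOn F g (Ioi p)) (hfi : IntegrableOn f (Iio p))
    (hgi : IntegrableOn g (Ioi p)) :
    ∫ x in {p}ᶜ, F x = (∫ x in Iio p, f x) + ∫ x in Ioi p, g x := by
  rw [← Iio_union_Ioi,
    setIntegral_union ((Iio_disjoint_Ici le_rfl).mono_right Ioi_subset_Ici_self) measurableSet_Ioi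
    (hfi.congr_fun hf.symm measurableSet_Iio) (hgi.congr_fun hg.symm measurableSet_Ioi),
    setIntegral_congr_fun measurableSet_Iio hf, setIntegral_congr_fun measurableSet_Ioi hg]

def soliton (A k a x : ℝ) : ℝ := A * sech (k * (x - a))

lemma hasDerivAt_soliton (A k a x : ℝ) :
    HasDerivAt (soliton A k a) (-(A * k) * (tanh (k * (x - a)) * sech (k * (x - a)))) x := by
  have h := ((hasDerivAt_sech _).comp x (((hasDerivAt_id x).sub_const a).const_mul k)).const_mul A
  exact h.congr_deriv (by simp only [id_eq]; ring)

section SolitonIntegrals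

variable {A k a α β : ℝ} {s : Set ℝ} (hk : 0 < k) (hs : MeasurableSet s)
  (himg : (fun x => tanh (k * (x - a))) '' s = Ioo α β) (hαβ : α ≤ β)
include hk hs himg hαβ

lemma soliton_sq_integral :
    IntegrableOn (fun x => soliton A k a x ^ 2) s ∧
      ∫ x in s, soliton A k a x ^ 2 = A ^ 2 * (β - α) / k := by
  obtain ⟨hint, hval⟩ := sech_sq_mul_comp_tanh_integral hk a hs himg hαβ continuous_const
  have e : (fun x => soliton A k a x ^ 2)
      = fun x => A ^ 2 * (sech (k * (x - a)) ^ 2 * (fun _ => (1 : ℝ)) (tanh (k * (x - a)))) := by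
    ext x; simp only [soliton]; ring
  rw [e, integral_const_mul, hval]
  exact ⟨hint.const_mul _, by rw [intervalIntegral.integral_const, smul_eq_mul]; ring⟩

lemma soliton_pow_four_integral :
    IntegrableOn (fun x => soliton A k a x ^ 4) s ∧
      ∫ x in s, soliton A k a x ^ 4 = A ^ 4 * ((β - α) - (β ^ 3 - α ^ 3) / 3) / k := by
  obtain ⟨hint, hval⟩ := sech_sq_mul_comp_tanh_integral hk a hs himg hαβ
    (g := fun u => 1 - u ^ 2) (by fun_prop)
  have e : (fun x => soliton A k a x ^ 4)
      = fun x => A ^ 4 * (sech (k * (x - a)) ^ 2 * (fun u => 1 - u ^ 2) (tanh (k * (x - a)))) := by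
    ext x; simp only [soliton, ← sech_sq]; ring
  rw [e, integral_const_mul, hval]
  refine ⟨hint.const_mul _, ?_⟩
  rw [intervalIntegral.integral_sub intervalIntegrable_const
    ((continuous_pow 2).intervalIntegrable _ _), intervalIntegral.integral_const, integral_pow,
    smul_eq_mul]
  ring

lemma deriv_soliton_sq_integral :
    IntegrableOn (fun x => deriv (soliton A k a) x ^ 2) s ∧
      ∫ x in s, deriv (soliton A k a) x ^ 2 = A ^ 2 * k * (β ^ 3 - α ^ 3) / 3 := by
  obtain ⟨hint, hval⟩ := sech_sq_mul_comp_tanh_integral hk a hs himg hαβ (continuous_pow 2)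
  have e : (fun x => deriv (soliton A k a) x ^ 2)
      = fun x => (A * k) ^ 2 * (sech (k * (x - a)) ^ 2 * (fun u => u ^ 2) (tanh (k * (x - a)))) := by
    ext x; rw [(hasDerivAt_soliton A k a x).deriv]; ring
  rw [e, integral_const_mul, hval]
  refine ⟨hint.const_mul _, ?_⟩
  rw [integral_pow]
  field_simp
  ring

end SolitonIntegrals

section PiecewiseSoliton

variable {ψ : ℝ → ℝ} {A B k a b p : ℝ} (hk : 0 < k) (h₁ : EqOn ψ (soliton A k a) (Iio p))
  (h₂ : EqOn ψ (soliton B k b) (Ici p))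
include hk h₁ h₂

lemma integral_sq_eq_of_eqOn_soliton :
    ∫ x, ψ x ^ 2 = (A ^ 2 * (tanh (k * (p - a)) + 1) + B ^ 2 * (1 - tanh (k * (p - b)))) / k := by
  obtain ⟨hi₁, hv₁⟩ := soliton_sq_integral (A := A) hk measurableSet_Iio
    (image_tanh_affine_Iio hk a p) (neg_one_lt_tanh _).le
  obtain ⟨hi₂, hv₂⟩ := soliton_sq_integral (A := B) hk measurableSet_Ioi
    (image_tanh_affine_Ioi hk b p) (tanh_lt_one _).le
  rw [integral_eq_add_of_eqOn_Iio_Ici (fun x hx => by rw [h₁ hx]) (fun x hx => by rw [h₂ hx])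
    hi₁ hi₂, hv₁, hv₂]
  ring

lemma integral_pow_four_eq_of_eqOn_soliton :
    ∫ x, ψ x ^ 4 = (A ^ 4 * ((tanh (k * (p - a)) + 1) - (tanh (k * (p - a)) ^ 3 + 1) / 3)
      + B ^ 4 * ((1 - tanh (k * (p - b))) - (1 - tanh (k * (p - b)) ^ 3) / 3)) / k := by
  obtain ⟨hi₁, hv₁⟩ := soliton_pow_four_integral (A := A) hk measurableSet_Iio
    (image_tanh_affine_Iio hk a p) (neg_one_lt_tanh _).le
  obtain ⟨hi₂, hv₂⟩ := soliton_pow_four_integral (A := B) hk measurableSet_Ioi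
    (image_tanh_affine_Ioi hk b p) (tanh_lt_one _).le
  rw [integral_eq_add_of_eqOn_Iio_Ici (fun x hx => by rw [h₁ hx]) (fun x hx => by rw [h₂ hx])
    hi₁ hi₂, hv₁, hv₂]
  ring

lemma setIntegral_deriv_sq_eq_of_eqOn_soliton :
    ∫ x in {p}ᶜ, deriv ψ x ^ 2
      = k * (A ^ 2 * (tanh (k * (p - a)) ^ 3 + 1) + B ^ 2 * (1 - tanh (k * (p - b)) ^ 3)) / 3 := by
  obtain ⟨hi₁, hv₁⟩ := deriv_soliton_sq_integral (A := A) hk measurableSet_Iio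
    (image_tanh_affine_Iio hk a p) (neg_one_lt_tanh _).le
  obtain ⟨hi₂, hv₂⟩ := deriv_soliton_sq_integral (A := B) hk measurableSet_Ioi
    (image_tanh_affine_Ioi hk b p) (tanh_lt_one _).le
  have hd₁ := h₁.deriv isOpen_Iio
  have hd₂ := (h₂.mono Ioi_subset_Ici_self).deriv isOpen_Ioi
  rw [setIntegral_compl_singleton_eq_add_of_eqOn (fun x hx => by rw [hd₁ hx])
    (fun x hx => by rw [hd₂ hx]) hi₁ hi₂, hv₁, hv₂]
  ring

end PiecewiseSoliton

lemma integrals_of_eqOn_soliton_of_tanh_eq {ψ : ℝ → ℝ} {c k a b t₁ t₂ : ℝ} (hk : 0 < k)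
    (h₁ : EqOn ψ (soliton c k a) (Iio 0)) (h₂ : EqOn ψ (soliton (-c) k b) (Ici 0))
    (hτ₁ : tanh (k * (0 - a)) = -t₁) (hτ₂ : tanh (k * (0 - b)) = t₂) :
    ∫ x, ψ x ^ 2 = c ^ 2 * (2 - (t₁ + t₂)) / k ∧
      ∫ x in {0}ᶜ, deriv ψ x ^ 2 = c ^ 2 * k * (2 - (t₁ ^ 3 + t₂ ^ 3)) / 3 ∧
      ∫ x, ψ x ^ 4 = (c ^ 2) ^ 2 * ((2 - (t₁ + t₂)) - (2 - (t₁ ^ 3 + t₂ ^ 3)) / 3) / k := by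
  rw [integral_sq_eq_of_eqOn_soliton hk h₁ h₂, setIntegral_deriv_sq_eq_of_eqOn_soliton hk h₁ h₂,
    integral_pow_four_eq_of_eqOn_soliton hk h₁ h₂, hτ₁, hτ₂]
  refine ⟨by ring, by ring, by ring⟩

lemma tanh_mul_half_log {k t : ℝ} (hk : k ≠ 0) (ht : t ∈ Ioo (-1) 1) :
    tanh (k * (1 / (2 * k) * log ((1 + t) / (1 - t)))) = t := by
  rw [show k * (1 / (2 * k) * log ((1 + t) / (1 - t))) = 1 / 2 * log ((1 + t) / (1 - t)) by
    field_simp, ← artanh_eq_half_log (Ioo_subset_Icc_self ht), tanh_artanh ht]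

lemma sech_eq_of_tanh_sq_add_sq {x u : ℝ} (h : tanh x ^ 2 + u ^ 2 = 1) (hu : 0 ≤ u) :
    sech x = u :=
  (sq_eq_sq₀ (sech_pos x).le hu).mp (by rw [sech_sq]; linarith)

lemma matching_roots_spec {s t₁ t₂ : ℝ} (hs : 0 < s) (hs8 : 8 ≤ s ^ 2)
    (ht₁ : t₁ = (1 + √(1 + s ^ 2) + √(s ^ 2 - 2 - 2 * √(1 + s ^ 2))) / (2 * s))
    (ht₂ : t₂ = (1 + √(1 + s ^ 2) - √(s ^ 2 - 2 - 2 * √(1 + s ^ 2))) / (2 * s)) :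
    t₁ ∈ Ioo 0 1 ∧ t₂ ∈ Ioo 0 1 ∧ t₁ + t₂ = (1 + √(1 + s ^ 2)) / s ∧ t₁ ^ 2 + t₂ ^ 2 = 1 := by
  set r := √(1 + s ^ 2)
  have hr0 : 0 ≤ r := sqrt_nonneg _
  have hr : r ^ 2 = 1 + s ^ 2 := sq_sqrt (by positivity)
  have hr_le : 2 * r ≤ s ^ 2 - 2 := by nlinarith
  set q := √(s ^ 2 - 2 - 2 * r)
  have hq0 : 0 ≤ q := sqrt_nonneg _
  have hq : q ^ 2 = s ^ 2 - 2 - 2 * r := sq_sqrt (by linarith)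
  have hsr : s < r := lt_of_pow_lt_pow_left₀ 2 hr0 (by linarith)
  have hr2s : r < 2 * s - 1 := lt_of_pow_lt_pow_left₀ 2 (by nlinarith) (by nlinarith)
  have hq_lt : q < 1 + r := lt_of_pow_lt_pow_left₀ 2 (by positivity) (by nlinarith)
  have hq_lt' : q < 2 * s - 1 - r := lt_of_pow_lt_pow_left₀ 2 (by linarith)
    (by nlinarith [mul_pos (by linarith : 0 < r + 1) (sub_pos.mpr hsr)])
  subst ht₁ ht₂
  simp only [mem_Ioo, div_pos_iff_of_pos_right (by positivity : (0 : ℝ) < 2 * s),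
    div_lt_one (by positivity : (0 : ℝ) < 2 * s)]
  refine ⟨⟨by positivity, by linarith⟩, ⟨by linarith, by linarith⟩, by field_simp; ring, ?_⟩
  field_simp
  linear_combination 2 * hq + 2 * hr

/-- `f₁`, `f₂` are the two branches of `ψ`, so `ψ(0-) = f₁ 0` and `ψ(0+) = f₂ 0`. -/
theorem statement13 (γ lam ω : ℝ) (hγ : 0 < γ) (hlam : 0 < lam) (hω : 8 / γ ^ 2 < ω)
    (t₁ t₂ xbar₁ xbar₂ : ℝ)
    (ht₁ : t₁ = (1 + Real.sqrt (1 + γ ^ 2 * ω)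
        + Real.sqrt (γ ^ 2 * ω - 2 - 2 * Real.sqrt (1 + γ ^ 2 * ω)))
      / (2 * γ * Real.sqrt ω))
    (ht₂ : t₂ = (1 + Real.sqrt (1 + γ ^ 2 * ω)
        - Real.sqrt (γ ^ 2 * ω - 2 - 2 * Real.sqrt (1 + γ ^ 2 * ω)))
      / (2 * γ * Real.sqrt ω))
    (hxbar₁ : xbar₁ = (1 / (2 * Real.sqrt ω)) * Real.log ((1 + t₁) / (1 - t₁)))
    (hxbar₂ : xbar₂ = -(1 / (2 * Real.sqrt ω)) * Real.log ((1 + t₂) / (1 - t₂)))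
    (f₁ f₂ ψ : ℝ → ℝ)
    (hf₁ : ∀ x, f₁ x = Real.sqrt (2 * ω / lam) * sech (Real.sqrt ω * (x - xbar₁)))
    (hf₂ : ∀ x, f₂ x = -(Real.sqrt (2 * ω / lam) * sech (Real.sqrt ω * (x - xbar₂))))
    (hψ : ∀ x, ψ x = if x < 0 then f₁ x else f₂ x) :
    (∫ x : ℝ, (ψ x) ^ 2)
      = 4 * Real.sqrt ω / lam - (2 / (lam * γ)) * Real.sqrt (1 + γ ^ 2 * ω) - 2 / (lam * γ) ∧
    (1 / 2) * (∫ x in ({(0:ℝ)}ᶜ : Set ℝ), (deriv ψ x) ^ 2)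
        - (1 / (2 * γ)) * (f₂ 0 - f₁ 0) ^ 2 - (lam / 4) * (∫ x : ℝ, (ψ x) ^ 4)
      = -(2 / (3 * lam)) * ω ^ ((3:ℝ)/2)
        + ((γ ^ 2 * ω - 2) / (3 * lam * γ ^ 3)) * Real.sqrt (γ ^ 2 * ω + 1)
        - 2 / (3 * lam * γ ^ 3) ∧
    ((1 / 2) * (∫ x in ({(0:ℝ)}ᶜ : Set ℝ), (deriv ψ x) ^ 2)
        - (1 / (2 * γ)) * (f₂ 0 - f₁ 0) ^ 2 - (lam / 4) * (∫ x : ℝ, (ψ x) ^ 4))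
        + (ω / 2) * (∫ x : ℝ, (ψ x) ^ 2)
      = (4 / (3 * lam)) * ω ^ ((3:ℝ)/2)
        - (2 / (3 * lam * γ ^ 3)) * (γ ^ 2 * ω + 1) ^ ((3:ℝ)/2)
        - ω / (lam * γ) - 2 / (3 * lam * γ ^ 3) := by
  have hω0 : 0 < ω := lt_trans (by positivity) hω
  set k := √ω with hk_def
  have hk : 0 < k := sqrt_pos.mpr hω0
  have hk2 : k ^ 2 = ω := sq_sqrt hω0.le
  have hγk : (γ * k) ^ 2 = γ ^ 2 * ω := by rw [mul_pow, hk2]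
  obtain ⟨ht₁_mem, ht₂_mem, hS, hT⟩ := matching_roots_spec (t₁ := t₁) (t₂ := t₂) (mul_pos hγ hk)
    (by rw [hγk]; rw [div_lt_iff₀ (by positivity)] at hω; linarith)
    (by rw [hγk, ht₁]; ring) (by rw [hγk, ht₂]; ring)
  rw [hγk] at hS
  have hU : t₁ ^ 3 + t₂ ^ 3 = (t₁ + t₂) * (3 - (t₁ + t₂) ^ 2) / 2 := by
    linear_combination (3 / 2 * (t₁ + t₂)) * hT
  have hτ₁ : tanh (k * (0 - xbar₁)) = -t₁ := by
    rw [hxbar₁, zero_sub, mul_neg, tanh_neg,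
      tanh_mul_half_log hk.ne' (Ioo_subset_Ioo_left (by norm_num) ht₁_mem)]
  have hτ₂ : tanh (k * (0 - xbar₂)) = t₂ := by
    rw [hxbar₂, zero_sub, neg_mul, neg_neg,
      tanh_mul_half_log hk.ne' (Ioo_subset_Ioo_left (by norm_num) ht₂_mem)]
  set c := √(2 * ω / lam) with hc_def
  have hc : c ^ 2 = 2 * k ^ 2 / lam := by rw [hc_def, sq_sqrt (by positivity), hk2]
  have h₁ : EqOn ψ (soliton c k xbar₁) (Iio 0) := fun x hx => by
    rw [hψ, if_pos (show x < 0 from hx), hf₁, soliton]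
  have h₂ : EqOn ψ (soliton (-c) k xbar₂) (Ici 0) := fun x hx => by
    rw [hψ, if_neg (not_lt.mpr hx), hf₂, soliton, neg_mul]
  have hsech₁ : sech (k * (0 - xbar₁)) = t₂ :=
    sech_eq_of_tanh_sq_add_sq (by rw [hτ₁]; linear_combination hT) ht₂_mem.1.le
  have hsech₂ : sech (k * (0 - xbar₂)) = t₁ :=
    sech_eq_of_tanh_sq_add_sq (by rw [hτ₂]; linear_combination hT) ht₁_mem.1.le
  have hjump : (f₂ 0 - f₁ 0) ^ 2 = c ^ 2 * (t₁ + t₂) ^ 2 := by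
    rw [hf₁, hf₂, hsech₁, hsech₂]; ring
  obtain ⟨hmass, hkin, hquart⟩ := integrals_of_eqOn_soliton_of_tanh_eq hk h₁ h₂ hτ₁ hτ₂
  rw [hmass, hkin, hquart, hjump, hU, hS, hc, rpow_div_two_eq_sqrt _ hω0.le,
    rpow_div_two_eq_sqrt _ (by positivity), rpow_ofNat, rpow_ofNat, ← hk_def,
    add_comm (γ ^ 2 * ω) 1, ← hk2]
  set r := √(1 + γ ^ 2 * k ^ 2)
  have hr : r ^ 2 = 1 + γ ^ 2 * k ^ 2 := sq_sqrt (by positivity)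
  -- the action is the energy plus `ω / 2` times the mass
  rw [← and_assoc, and_iff_left_of_imp fun h => ?_]
  · refine ⟨by field_simp; ring, ?_⟩
    linear_combination (norm := (field_simp; ring)) (r / (3 * lam * γ ^ 3)) * hr
  · linear_combination (norm := (field_simp; ring)) h.2 + (k ^ 2 / 2) * h.1 + (2 * r / (3 * lam * γ ^ 3)) * hr

end
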